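/- For the training loss f of a deep linear network, for every θ ∈ ℝ^d: λ_min(∇²f(θ)) ≥ −(n−1)·√(min{d_0, d_n})·‖∇φ(W_{n:1})‖_F · max_{J⊆{1,…,n}, |J| = n−2} ∏_{j∈J} ‖W_j‖_spectral, where an empty product equals one. -/

import Mathlib

open scoped RealInnerProductSpace
open Matrix

noncomputable section

/-- The family of weight matrices of a depth-`n` fully connected network with layer widths
`dims 0, dims 1, …, dims n`: `W j` maps `ℝ^{dims j}` to `ℝ^{dims (j+1)}` (zero-indexed). -/
abbrev WeightFam (n : ℕ) (dims : ℕ → ℕ) : Type :=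
  ∀ j : Fin n, Matrix (Fin (dims (j.val + 1))) (Fin (dims j.val)) ℝ

/-- Rectangular matrix with ones on the diagonal: equals the identity matrix whenever the
two dimensions coincide. -/
def castId (p q : ℕ) : Matrix (Fin p) (Fin q) ℝ :=
  Matrix.of fun i j => if (i : ℕ) = (j : ℕ) then 1 else 0

/-- `segProd dims W a b = W_{b-1} * ⋯ * W_a` (zero-indexed), the identity when `a = b`.
This realizes the paper's product `W_{b : a+1}` (one-indexed), empty products being
identity matrices. -/
def segProd {n : ℕ} (dims : ℕ → ℕ) (W : WeightFam n dims) (a : ℕ) :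
    (b : ℕ) → Matrix (Fin (dims b)) (Fin (dims a)) ℝ
  | 0 => castId (dims 0) (dims a)
  | b + 1 =>
      if a = b + 1 then castId (dims (b + 1)) (dims a)
      else if hb : b < n then W ⟨b, hb⟩ * segProd dims W a b else 0

/-- Multiplication of a Euclidean vector by a matrix. -/
def mulVecE {p q : ℕ} (M : Matrix (Fin p) (Fin q) ℝ) (v : EuclideanSpace ℝ (Fin q)) :
    EuclideanSpace ℝ (Fin p) :=
  (EuclideanSpace.equiv (Fin p) ℝ).symm (M.mulVec (EuclideanSpace.equiv (Fin q) ℝ v))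

/-- The space of `p × q` real matrices regarded as a Euclidean space (so that the Euclidean
norm is the Frobenius norm). -/
abbrev MatE (p q : ℕ) : Type := EuclideanSpace ℝ (Fin p × Fin q)

/-- Conversion from the Euclidean representation to the matrix itself. -/
def toMat {p q : ℕ} (w : MatE p q) : Matrix (Fin p) (Fin q) ℝ :=
  Matrix.of fun i j => w (i, j)

/-- Conversion from a matrix to its Euclidean representation. -/
def ofMat {p q : ℕ} (M : Matrix (Fin p) (Fin q) ℝ) : MatE p q :=
  (EuclideanSpace.equiv (Fin p × Fin q) ℝ).symm fun ij => M ij.1 ij.2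

/-- The Hessian of `f` at `x`, regarded as a quadratic form, evaluated at `v`. -/
def hessQ {E : Type*} [NormedAddCommGroup E] [InnerProductSpace ℝ E] [CompleteSpace E]
    (f : E → ℝ) (x v : E) : ℝ :=
  ⟪v, fderiv ℝ (gradient f) x v⟫

/-- `φ(W) = (1/|S|) ∑ᵢ ℓ(W xᵢ, yᵢ)`, as a function of the Euclidean representation of the
matrix `W`. -/
def phiE {Y : Type*} {s : ℕ} (n : ℕ) (dims : ℕ → ℕ)
    (loss : EuclideanSpace ℝ (Fin (dims n)) → Y → ℝ)
    (x : Fin s → EuclideanSpace ℝ (Fin (dims 0))) (y : Fin s → Y)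
    (w : MatE (dims n) (dims 0)) : ℝ :=
  (1 / (s : ℝ)) * ∑ i, loss (mulVecE (toMat w) (x i)) (y i)

/-- The training loss of the deep linear network: `f θ = φ (W_{n:1})`. -/
def linLoss {Y : Type*} {s : ℕ} {n d : ℕ} (dims : ℕ → ℕ)
    (loss : EuclideanSpace ℝ (Fin (dims n)) → Y → ℝ)
    (x : Fin s → EuclideanSpace ℝ (Fin (dims 0))) (y : Fin s → Y)
    (arr : EuclideanSpace ℝ (Fin d) →ₗ[ℝ] WeightFam n dims)
    (θ : EuclideanSpace ℝ (Fin d)) : ℝ :=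
  phiE n dims loss x y (ofMat (segProd dims (arr θ) 0 n))

/-- Spectral norm of a matrix (largest singular value), i.e. the operator norm with respect
to Euclidean norms. -/
def specNorm {p q : ℕ} (M : Matrix (Fin p) (Fin q) ℝ) : ℝ :=
  sSup {r : ℝ | ∃ v : EuclideanSpace ℝ (Fin q), ‖v‖ = 1 ∧ r = ‖mulVecE M v‖}


section Aux

set_option linter.unusedSectionVars false
set_option linter.unusedVariables false

variable {F : Type*} [NormedAddCommGroup F] [InnerProductSpace ℝ F] [CompleteSpace F]

lemma lmono {h : ℝ → ℝ} {c x : ℝ} (hm : Monotone h) (hd : HasDerivAt h c x) : 0 ≤ c := by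
  rw [hasDerivAt_iff_tendsto_slope] at hd
  refine ge_of_tendsto hd ?_
  filter_upwards [self_mem_nhdsWithin] with y hy
  rcases lt_or_gt_of_ne (Ne.symm hy) with h1 | h1
  · have : h x ≤ h y := hm h1.le
    rw [slope_def_field]
    exact div_nonneg (by linarith) (by linarith)
  · have : h y ≤ h x := hm h1.le
    rw [slope_def_field, div_nonneg_iff]
    right
    constructor <;> linarith

lemma line_hasDerivAt (x v : F) (t : ℝ) : HasDerivAt (fun t : ℝ => x + t • v) v t := by
  simpa using ((hasDerivAt_id t).smul_const v).const_add x

lemma deriv_line (φ : F → ℝ) (hφ : ContDiff ℝ 2 φ) (x v : F) :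
    deriv (fun t : ℝ => φ (x + t • v)) = fun t => fderiv ℝ φ (x + t • v) v := by
  funext t
  exact (((hφ.differentiable two_ne_zero) (x + t • v)).hasFDerivAt.comp_hasDerivAt t
    (line_hasDerivAt x v t)).deriv

lemma hasDerivAt_deriv_line (φ : F → ℝ) (hφ : ContDiff ℝ 2 φ) (x v : F) :
    HasDerivAt (deriv (fun t : ℝ => φ (x + t • v)))
      ((fderiv ℝ (fderiv ℝ φ) x v) v) 0 := by
  rw [deriv_line φ hφ x v]
  have hΦ : ContDiff ℝ 1 (fderiv ℝ φ) := hφ.fderiv_right (le_refl 2)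
  have h2 : HasDerivAt (fun t : ℝ => fderiv ℝ φ (x + t • v))
      (fderiv ℝ (fderiv ℝ φ) x v) 0 := by
    have := ((hΦ.differentiable one_ne_zero) (x + (0:ℝ) • v)).hasFDerivAt.comp_hasDerivAt 0
      (line_hasDerivAt x v 0)
    simpa [Function.comp_def] using this
  simpa using h2.clm_apply (hasDerivAt_const 0 v)

lemma deriv2_line (φ : F → ℝ) (hφ : ContDiff ℝ 2 φ) (x v : F) :
    deriv (deriv (fun t : ℝ => φ (x + t • v))) 0 = (fderiv ℝ (fderiv ℝ φ) x v) v :=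
  (hasDerivAt_deriv_line φ hφ x v).deriv

lemma hessQ_eq_fderiv2 (f : F → ℝ) (hf : ContDiff ℝ 2 f) (x v : F) :
    ⟪v, fderiv ℝ (gradient f) x v⟫ = (fderiv ℝ (fderiv ℝ f) x v) v := by
  have hgrad : gradient f = (InnerProductSpace.toDual ℝ F).symm ∘ (fun y => fderiv ℝ f y) :=
    rfl
  rw [hgrad, LinearIsometryEquiv.comp_fderiv]
  have : (fderiv ℝ (fun y => fderiv ℝ f y) x) v = fderiv ℝ (fderiv ℝ f) x v := rfl
  simp only [ContinuousLinearMap.coe_comp', Function.comp_apply,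
    LinearIsometryEquiv.coe_coe'', this]
  rw [real_inner_comm, InnerProductSpace.toDual_symm_apply]

lemma fderiv2_nonneg_of_convex (φ : F → ℝ) (hφ : ContDiff ℝ 2 φ)
    (hc : ConvexOn ℝ Set.univ φ) (w m : F) :
    0 ≤ (fderiv ℝ (fderiv ℝ φ) w m) m := by
  set g := fun t : ℝ => φ (w + t • m) with hg
  have hgc : ContDiff ℝ 2 g :=
    hφ.comp (contDiff_const.add (contDiff_id.smul contDiff_const))
  have hgconv : ConvexOn ℝ Set.univ g := by
    have := hc.comp_affineMap (AffineMap.lineMap w (w + m) : ℝ →ᵃ[ℝ] F)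
    have heq : (φ ∘ (AffineMap.lineMap w (w + m) : ℝ →ᵃ[ℝ] F)) = g := by
      funext t
      simp [hg, AffineMap.lineMap_apply, add_comm]
    rw [heq] at this
    simpa using this
  have hmono : Monotone (deriv g) := by
    rw [← monotoneOn_univ]
    exact hgconv.monotoneOn_deriv (fun x _ => ((hgc.differentiable two_ne_zero) x))
  exact lmono hmono (hasDerivAt_deriv_line φ hφ w m)


lemma polyCurve_deriv2 (φ : F → ℝ) (hφ : ContDiff ℝ 2 φ) {N : ℕ} (hN : 2 ≤ N) (m : ℕ → F) :
    deriv (deriv fun t : ℝ => φ (∑ k ∈ Finset.range (N + 1), t ^ k • m k)) 0 =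
      (fderiv ℝ (fderiv ℝ φ) (m 0) (m 1)) (m 1) + fderiv ℝ φ (m 0) ((2 : ℝ) • m 2) := by
  set γ : ℝ → F := fun t => ∑ k ∈ Finset.range (N + 1), t ^ k • m k with hγdef
  set γ₁ : ℝ → F := fun t => ∑ k ∈ Finset.range (N + 1), ((k : ℝ) * t ^ (k - 1)) • m k with hγ₁def
  have hγ : ∀ t, HasDerivAt γ (γ₁ t) t := fun t =>
    HasDerivAt.fun_sum fun k _ => (hasDerivAt_pow k t).smul_const (m k)
  have hγ0 : γ 0 = m 0 := by
    show (∑ k ∈ Finset.range (N + 1), (0:ℝ) ^ k • m k) = m 0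
    rw [Finset.sum_eq_single 0]
    · simp
    · intro k _ hk
      simp [zero_pow hk]
    · intro h
      exact absurd (Finset.mem_range.2 (Nat.succ_pos N)) h
  have hγ₁0 : γ₁ 0 = m 1 := by
    show (∑ k ∈ Finset.range (N + 1), ((k:ℝ) * (0:ℝ) ^ (k - 1)) • m k) = m 1
    rw [Finset.sum_eq_single 1]
    · simp
    · intro k _ hk
      match k, hk with
      | 0, _ => simp
      | (j+2), _ => simp [zero_pow (Nat.succ_ne_zero j)]
    · intro h
      exact absurd (Finset.mem_range.2 (by omega)) h
  have hγ₂ : HasDerivAt γ₁ ((2 : ℝ) • m 2) 0 := by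
    have h := HasDerivAt.fun_sum (u := Finset.range (N + 1))
      (A := fun k t => ((k : ℝ) * t ^ (k - 1)) • m k)
      (A' := fun k => ((k : ℝ) * (((k - 1 : ℕ) : ℝ) * (0:ℝ) ^ (k - 1 - 1))) • m k)
      (fun k _ => (((hasDerivAt_pow (k - 1) (0:ℝ))).const_mul (k : ℝ)).smul_const (m k))
    have he : (∑ k ∈ Finset.range (N + 1),
        ((k : ℝ) * (((k - 1 : ℕ) : ℝ) * (0:ℝ) ^ (k - 1 - 1))) • m k) = (2 : ℝ) • m 2 := by
      rw [Finset.sum_eq_single 2]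
      · norm_num
      · intro k _ hk
        match k, hk with
        | 0, _ => simp
        | 1, _ => simp
        | (j+3), _ => simp [zero_pow (Nat.succ_ne_zero j)]
      · intro h
        exact absurd (Finset.mem_range.2 (by omega)) h
    rwa [he] at h
  have hderiv : deriv (fun t => φ (γ t)) = fun t => fderiv ℝ φ (γ t) (γ₁ t) :=
    funext fun t => (((hφ.differentiable two_ne_zero) (γ t)).hasFDerivAt.comp_hasDerivAt t
      (hγ t)).deriv
  have hc : HasDerivAt (fun t => fderiv ℝ φ (γ t))
      (fderiv ℝ (fderiv ℝ φ) (m 0) (m 1)) 0 := by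
    have h := (((show ContDiff ℝ 1 (fderiv ℝ φ) from hφ.fderiv_right (le_refl 2)).differentiable one_ne_zero) (γ 0)).hasFDerivAt.comp_hasDerivAt
      0 (hγ 0)
    rwa [hγ0, hγ₁0] at h
  have htot := hc.clm_apply hγ₂
  rw [hγ₁0, hγ0] at htot
  calc deriv (deriv fun t : ℝ => φ (γ t)) 0 = deriv (fun t => fderiv ℝ φ (γ t) (γ₁ t)) 0 := by
        rw [hderiv]
    _ = _ := htot.deriv

end Aux

section Aux2

-- basic lemmas
lemma mulVecE_apply {p q : ℕ} (M : Matrix (Fin p) (Fin q) ℝ) (v : EuclideanSpace ℝ (Fin q))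
    (i : Fin p) : mulVecE M v i = ∑ j, M i j * v j := rfl

lemma ofMat_apply {p q : ℕ} (M : Matrix (Fin p) (Fin q) ℝ) (ij : Fin p × Fin q) :
    ofMat M ij = M ij.1 ij.2 := rfl

lemma toMat_ofMat {p q : ℕ} (M : Matrix (Fin p) (Fin q) ℝ) : toMat (ofMat M) = M := rfl

def mulVecL {p q : ℕ} (M : Matrix (Fin p) (Fin q) ℝ) :
    EuclideanSpace ℝ (Fin q) →L[ℝ] EuclideanSpace ℝ (Fin p) :=
  LinearMap.toContinuousLinearMap
    { toFun := fun v => mulVecE M v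
      map_add' := fun u v => by
        ext i
        show (∑ j, M i j * (u j + v j)) = (∑ j, M i j * u j) + ∑ j, M i j * v j
        simp [mul_add, Finset.sum_add_distrib]
      map_smul' := fun c v => by
        ext i
        show (∑ j, M i j * (c * v j)) = c * ∑ j, M i j * v j
        rw [Finset.mul_sum]
        exact Finset.sum_congr rfl fun j _ => by ring }

lemma mulVecL_apply {p q : ℕ} (M : Matrix (Fin p) (Fin q) ℝ) (v : EuclideanSpace ℝ (Fin q)) :
    mulVecL M v = mulVecE M v := rfl

lemma specNorm_nonneg {p q : ℕ} (M : Matrix (Fin p) (Fin q) ℝ) : 0 ≤ specNorm M :=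
  Real.sSup_nonneg (fun r hr => by obtain ⟨v, _, rfl⟩ := hr; exact norm_nonneg _)

lemma specNorm_eq_opNorm {p q : ℕ} (M : Matrix (Fin p) (Fin q) ℝ) :
    specNorm M = ‖mulVecL M‖ := by
  apply le_antisymm
  · apply Real.sSup_le _ (norm_nonneg _)
    rintro r ⟨v, hv, rfl⟩
    calc ‖mulVecE M v‖ = ‖mulVecL M v‖ := rfl
      _ ≤ ‖mulVecL M‖ * ‖v‖ := (mulVecL M).le_opNorm v
      _ = ‖mulVecL M‖ := by rw [hv, mul_one]
  · apply ContinuousLinearMap.opNorm_le_bound _ (specNorm_nonneg M)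
    intro u
    rcases eq_or_ne u 0 with rfl | hu
    · simp
    · have hnu : ‖u‖ ≠ 0 := norm_ne_zero_iff.2 hu
      set v : EuclideanSpace ℝ (Fin q) := ‖u‖⁻¹ • u with hvdef
      have hv : ‖v‖ = 1 := by
        rw [hvdef, norm_smul, norm_inv, norm_norm, inv_mul_cancel₀ hnu]
      have hbdd : BddAbove {r : ℝ | ∃ v : EuclideanSpace ℝ (Fin q), ‖v‖ = 1 ∧ r = ‖mulVecE M v‖} := by
        refine ⟨‖mulVecL M‖, ?_⟩
        rintro r ⟨w, hw, rfl⟩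
        calc ‖mulVecE M w‖ = ‖mulVecL M w‖ := rfl
          _ ≤ ‖mulVecL M‖ * ‖w‖ := (mulVecL M).le_opNorm w
          _ = ‖mulVecL M‖ := by rw [hw, mul_one]
      have hmem : ‖mulVecE M v‖ ≤ specNorm M :=
        le_csSup hbdd ⟨v, hv, rfl⟩
      have : mulVecL M u = ‖u‖ • mulVecL M v := by
        rw [hvdef, (mulVecL M).map_smul, smul_smul, mul_inv_cancel₀ hnu, one_smul]
      rw [this, norm_smul, norm_norm, mul_comm]
      exact mul_le_mul_of_nonneg_right hmem (norm_nonneg u)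

lemma norm_mulVecE_le {p q : ℕ} (M : Matrix (Fin p) (Fin q) ℝ) (v : EuclideanSpace ℝ (Fin q)) :
    ‖mulVecE M v‖ ≤ specNorm M * ‖v‖ := by
  rw [specNorm_eq_opNorm, ← mulVecL_apply]
  exact (mulVecL M).le_opNorm v

lemma mulVecL_mul {p q r : ℕ} (A : Matrix (Fin p) (Fin q) ℝ) (B : Matrix (Fin q) (Fin r) ℝ) :
    mulVecL (A * B) = (mulVecL A).comp (mulVecL B) := by
  ext v i
  show (A * B).mulVec v i = A.mulVec (B.mulVec v) i
  rw [Matrix.mulVec_mulVec]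

lemma specNorm_mul_le {p q r : ℕ} (A : Matrix (Fin p) (Fin q) ℝ) (B : Matrix (Fin q) (Fin r) ℝ) :
    specNorm (A * B) ≤ specNorm A * specNorm B := by
  rw [specNorm_eq_opNorm, specNorm_eq_opNorm, specNorm_eq_opNorm, mulVecL_mul]
  exact ContinuousLinearMap.opNorm_comp_le _ _

lemma euclid_norm_sq {m : Type*} [Fintype m] (v : EuclideanSpace ℝ m) :
    ‖v‖ ^ 2 = ∑ i, v i ^ 2 := by
  rw [EuclideanSpace.norm_eq, Real.sq_sqrt (by positivity)]
  simp [sq_abs]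

lemma specNorm_castId_le_one (p q : ℕ) : specNorm (castId p q) ≤ 1 := by
  rw [specNorm_eq_opNorm]
  apply ContinuousLinearMap.opNorm_le_bound _ zero_le_one
  intro v
  rw [one_mul, mulVecL_apply]
  have h1 : ‖mulVecE (castId p q) v‖ ^ 2 ≤ ‖v‖ ^ 2 := by
    rw [euclid_norm_sq, euclid_norm_sq]
    have hrow : ∀ i : Fin p, (mulVecE (castId p q) v i) ^ 2 =
        ∑ j : Fin q, (if (i : ℕ) = (j : ℕ) then 1 else 0) * v j ^ 2 := by
      intro i
      rw [mulVecE_apply]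
      by_cases h : (i : ℕ) < q
      · rw [Finset.sum_eq_single ⟨(i : ℕ), h⟩, Finset.sum_eq_single (⟨(i : ℕ), h⟩ : Fin q)]
        · simp [castId]
        · intro b _ hb
          have : (i : ℕ) ≠ (b : ℕ) := fun hc => hb (by ext; simp [hc.symm])
          simp [this]
        · intro h'; exact absurd (Finset.mem_univ _) h'
        · intro b _ hb
          have : (i : ℕ) ≠ (b : ℕ) := fun hc => hb (by ext; simp [hc.symm])
          simp [castId, this]
        · intro h'; exact absurd (Finset.mem_univ _) h'
      · have hz : ∀ j : Fin q, (i : ℕ) ≠ (j : ℕ) := fun j hc => h (hc ▸ j.2)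
        rw [Finset.sum_eq_zero, Finset.sum_eq_zero]
        · simp
        · intro j _; simp [hz j]
        · intro j _; simp [castId, hz j]
    calc ∑ i, (mulVecE (castId p q) v i) ^ 2
        = ∑ i : Fin p, ∑ j : Fin q, (if (i : ℕ) = (j : ℕ) then 1 else 0) * v j ^ 2 := by
          exact Finset.sum_congr rfl fun i _ => hrow i
      _ = ∑ j : Fin q, (∑ i : Fin p, if (i : ℕ) = (j : ℕ) then (1:ℝ) else 0) * v j ^ 2 := by
          rw [Finset.sum_comm]
          exact Finset.sum_congr rfl fun j _ => by rw [Finset.sum_mul]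
      _ ≤ ∑ j : Fin q, 1 * v j ^ 2 := by
          apply Finset.sum_le_sum
          intro j _
          apply mul_le_mul_of_nonneg_right _ (sq_nonneg _)
          by_cases h : (j : ℕ) < p
          · rw [Finset.sum_eq_single (⟨(j : ℕ), h⟩ : Fin p)]
            · simp
            · intro b _ hb
              have : (b : ℕ) ≠ (j : ℕ) := fun hc => hb (by ext; simp [hc])
              simp [this]
            · intro h'; exact absurd (Finset.mem_univ _) h'
          · rw [Finset.sum_eq_zero]
            · exact zero_le_one
            · intro i _
              have : (i : ℕ) ≠ (j : ℕ) := fun hc => h (hc ▸ i.2)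
              simp [this]
      _ = ∑ j : Fin q, v j ^ 2 := by simp
  exact (pow_le_pow_iff_left₀ (norm_nonneg _) (norm_nonneg _) two_ne_zero).1 h1

lemma frob_sq {p q : ℕ} (M : Matrix (Fin p) (Fin q) ℝ) :
    ‖ofMat M‖ ^ 2 = ∑ i, ∑ j, M i j ^ 2 := by
  rw [euclid_norm_sq]
  rw [Fintype.sum_prod_type]
  rfl

lemma sq_eq_norm_eq {a b : ℝ} (ha : 0 ≤ a) (hb : 0 ≤ b) (h : a ^ 2 ≤ b ^ 2) : a ≤ b :=
  (pow_le_pow_iff_left₀ ha hb two_ne_zero).1 h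

lemma frob_transpose {p q : ℕ} (M : Matrix (Fin p) (Fin q) ℝ) :
    ‖ofMat Mᵀ‖ = ‖ofMat M‖ := by
  have h : ‖ofMat Mᵀ‖ ^ 2 = ‖ofMat M‖ ^ 2 := by
    rw [frob_sq, frob_sq, Finset.sum_comm]
    exact Finset.sum_congr rfl fun i _ => Finset.sum_congr rfl fun j _ => by
      rw [Matrix.transpose_apply]
  exact le_antisymm (sq_eq_norm_eq (norm_nonneg _) (norm_nonneg _) h.le)
    (sq_eq_norm_eq (norm_nonneg _) (norm_nonneg _) h.ge)

lemma mulVecL_transpose_eq_adjoint {p q : ℕ} (M : Matrix (Fin p) (Fin q) ℝ) :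
    mulVecL Mᵀ = ContinuousLinearMap.adjoint (mulVecL M) := by
  rw [ContinuousLinearMap.eq_adjoint_iff]
  intro u v
  show (inner ℝ (mulVecE Mᵀ u) v : ℝ) = inner ℝ u (mulVecE M v)
  simp only [PiLp.inner_apply, RCLike.inner_apply, conj_trivial, mulVecE_apply]
  rw [show (∑ x, v x * ∑ x1, Mᵀ x x1 * u x1) = ∑ j, (∑ i, Mᵀ j i * u i) * v j from
      Finset.sum_congr rfl fun j _ => mul_comm _ _,
    show (∑ x, (∑ x1, M x x1 * v x1) * u x) = ∑ i, u i * ∑ j, M i j * v j from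
      Finset.sum_congr rfl fun i _ => mul_comm _ _]
  calc ∑ j, (∑ i, Mᵀ j i * u i) * v j = ∑ j, ∑ i, M i j * u i * v j := by
        exact Finset.sum_congr rfl fun j _ => by
          rw [Finset.sum_mul]
          exact Finset.sum_congr rfl fun i _ => by rw [Matrix.transpose_apply]
    _ = ∑ i, ∑ j, M i j * u i * v j := Finset.sum_comm
    _ = ∑ i, u i * ∑ j, M i j * v j := by
        exact Finset.sum_congr rfl fun i _ => by
          rw [Finset.mul_sum]
          exact Finset.sum_congr rfl fun j _ => by ring

lemma specNorm_transpose {p q : ℕ} (M : Matrix (Fin p) (Fin q) ℝ) :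
    specNorm Mᵀ = specNorm M := by
  rw [specNorm_eq_opNorm, specNorm_eq_opNorm, mulVecL_transpose_eq_adjoint]
  exact ContinuousLinearMap.adjoint.norm_map (mulVecL M)

lemma frob_mul_le_left {p q r : ℕ} (A : Matrix (Fin p) (Fin q) ℝ)
    (X : Matrix (Fin q) (Fin r) ℝ) : ‖ofMat (A * X)‖ ≤ specNorm A * ‖ofMat X‖ := by
  apply sq_eq_norm_eq (norm_nonneg _) (mul_nonneg (specNorm_nonneg A) (norm_nonneg _))
  rw [frob_sq, mul_pow]
  set col : Fin r → EuclideanSpace ℝ (Fin q) := fun j => WithLp.toLp 2 (fun k => X k j) with hcol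
  have hentry : ∀ i j, (A * X) i j = mulVecE A (col j) i := fun i j => by
    rw [mulVecE_apply, Matrix.mul_apply]
  calc ∑ i, ∑ j, (A * X) i j ^ 2 = ∑ j, ∑ i, mulVecE A (col j) i ^ 2 := by
        rw [Finset.sum_comm]
        exact Finset.sum_congr rfl fun j _ => Finset.sum_congr rfl fun i _ => by rw [hentry]
    _ = ∑ j, ‖mulVecE A (col j)‖ ^ 2 := by
        exact Finset.sum_congr rfl fun j _ => (euclid_norm_sq _).symm
    _ ≤ ∑ j, (specNorm A * ‖col j‖) ^ 2 := by
        apply Finset.sum_le_sum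
        intro j _
        exact pow_le_pow_left₀ (norm_nonneg _) (norm_mulVecE_le A (col j)) 2
    _ = specNorm A ^ 2 * ∑ j, ‖col j‖ ^ 2 := by
        rw [Finset.mul_sum]
        exact Finset.sum_congr rfl fun j _ => by ring
    _ = specNorm A ^ 2 * ‖ofMat X‖ ^ 2 := by
        congr 1
        rw [frob_sq, Finset.sum_comm]
        exact Finset.sum_congr rfl fun j _ => by rw [euclid_norm_sq]

lemma frob_mul_le_right {p q r : ℕ} (X : Matrix (Fin p) (Fin q) ℝ)
    (C : Matrix (Fin q) (Fin r) ℝ) : ‖ofMat (X * C)‖ ≤ ‖ofMat X‖ * specNorm C := by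
  calc ‖ofMat (X * C)‖ = ‖ofMat (X * C)ᵀ‖ := (frob_transpose _).symm
    _ = ‖ofMat (Cᵀ * Xᵀ)‖ := by rw [Matrix.transpose_mul]
    _ ≤ specNorm Cᵀ * ‖ofMat Xᵀ‖ := frob_mul_le_left _ _
    _ = ‖ofMat X‖ * specNorm C := by rw [specNorm_transpose, frob_transpose, mul_comm]

lemma specNorm_le_frob {p q : ℕ} (M : Matrix (Fin p) (Fin q) ℝ) :
    specNorm M ≤ ‖ofMat M‖ := by
  rw [specNorm_eq_opNorm]
  apply ContinuousLinearMap.opNorm_le_bound _ (norm_nonneg _)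
  intro v
  apply sq_eq_norm_eq (norm_nonneg _) (mul_nonneg (norm_nonneg _) (norm_nonneg _))
  rw [mulVecL_apply, euclid_norm_sq, mul_pow, frob_sq, euclid_norm_sq, Finset.sum_mul]
  apply Finset.sum_le_sum
  intro i _
  rw [mulVecE_apply]
  exact Finset.sum_mul_sq_le_sq_mul_sq Finset.univ _ _

lemma ofMat_sum {p q : ℕ} {ι : Type*} (s : Finset ι) (f : ι → Matrix (Fin p) (Fin q) ℝ) :
    ofMat (∑ i ∈ s, f i) = ∑ i ∈ s, ofMat (f i) :=
  map_sum ({ toFun := ofMat, map_zero' := rfl, map_add' := fun _ _ => rfl } :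
    Matrix (Fin p) (Fin q) ℝ →+ MatE p q) f s


lemma ofMat_smul {p q : ℕ} (c : ℝ) (M : Matrix (Fin p) (Fin q) ℝ) :
    ofMat (c • M) = c • ofMat M := rfl

lemma pair_sum_identity (a : ℕ → ℝ) : ∀ N : ℕ,
    2 * (∑ k ∈ Finset.range N, ∑ j ∈ Finset.range k, a k * a j) +
      ∑ l ∈ Finset.range N, a l ^ 2 = (∑ l ∈ Finset.range N, a l) ^ 2 := by
  intro N
  induction N with
  | zero => simp
  | succ N ihN =>
    rw [Finset.sum_range_succ (fun k => ∑ j ∈ Finset.range k, a k * a j),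
      Finset.sum_range_succ (fun l => a l ^ 2), Finset.sum_range_succ a, ← Finset.mul_sum]
    linear_combination ihN

end Aux2

section Seg

variable {n : ℕ} (dims : ℕ → ℕ) (W V : WeightFam n dims)

lemma castId_self (p : ℕ) : castId p p = (1 : Matrix (Fin p) (Fin p) ℝ) := by
  ext i j
  simp [castId, Matrix.one_apply, Fin.ext_iff]

lemma segProd_same (a : ℕ) : segProd dims W a a = castId (dims a) (dims a) := by
  cases a with
  | zero => rfl
  | succ b => simp [segProd]

lemma segProd_succ_of_le {a b : ℕ} (hab : a ≤ b) (hb : b < n) :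
    segProd dims W a (b + 1) = W ⟨b, hb⟩ * segProd dims W a b := by
  have hne : a ≠ b + 1 := by omega
  simp [segProd, hne, hb]

/-- Coefficient matrices of the matrix polynomial `t ↦ segProd dims (W + t V) 0 b`. -/
def Dmat {n : ℕ} (dims : ℕ → ℕ) (W V : WeightFam n dims) :
    (b : ℕ) → ℕ → Matrix (Fin (dims b)) (Fin (dims 0)) ℝ
  | 0, 0 => castId (dims 0) (dims 0)
  | 0, _ + 1 => 0
  | b + 1, 0 => if hb : b < n then W ⟨b, hb⟩ * Dmat dims W V b 0 else 0
  | b + 1, k + 1 =>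
      if hb : b < n then
        W ⟨b, hb⟩ * Dmat dims W V b (k + 1) + V ⟨b, hb⟩ * Dmat dims W V b k
      else 0

lemma Dmat_zero_of_gt : ∀ b k : ℕ, b < k → Dmat dims W V b k = 0 := by
  intro b
  induction b with
  | zero =>
    intro k hk
    match k, hk with
    | k + 1, _ => rfl
  | succ b ih =>
    intro k hk
    match k, hk with
    | k + 1, hk =>
      show Dmat dims W V (b + 1) (k + 1) = 0
      rw [Dmat]
      by_cases hb : b < n
      · rw [dif_pos hb, ih (k + 1) (by omega), ih k (by omega), Matrix.mul_zero,
          Matrix.mul_zero, add_zero]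
      · rw [dif_neg hb]

lemma Dmat_k0 : ∀ b : ℕ, b ≤ n → Dmat dims W V b 0 = segProd dims W 0 b := by
  intro b
  induction b with
  | zero => intro _; rfl
  | succ b ih =>
    intro hb1
    have hb : b < n := by omega
    rw [Dmat, dif_pos hb, ih (by omega), segProd_succ_of_le dims W (Nat.zero_le b) hb]

/-- `V`-entry as a total function of a natural index. -/
def Vsel {n : ℕ} (dims : ℕ → ℕ) (V : WeightFam n dims) (j : ℕ) :
    Matrix (Fin (dims (j + 1))) (Fin (dims j)) ℝ :=
  if h : j < n then V ⟨j, h⟩ else 0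

/-- First-order coefficient. -/
def E1 {n : ℕ} (dims : ℕ → ℕ) (W V : WeightFam n dims) (b : ℕ) :
    Matrix (Fin (dims b)) (Fin (dims 0)) ℝ :=
  ∑ j ∈ Finset.range b,
    segProd dims W (j + 1) b * (Vsel dims V j * segProd dims W 0 j)

/-- Second-order coefficient. -/
def E2 {n : ℕ} (dims : ℕ → ℕ) (W V : WeightFam n dims) (b : ℕ) :
    Matrix (Fin (dims b)) (Fin (dims 0)) ℝ :=
  ∑ k ∈ Finset.range b, ∑ j ∈ Finset.range k,
    segProd dims W (k + 1) b *
      (Vsel dims V k * (segProd dims W (j + 1) k * (Vsel dims V j * segProd dims W 0 j)))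

lemma Dmat_k1 : ∀ b : ℕ, b ≤ n → Dmat dims W V b 1 = E1 dims W V b := by
  intro b
  induction b with
  | zero => intro _; simp [E1]; rfl
  | succ b ih =>
    intro hb1
    have hb : b < n := by omega
    have hstep : Dmat dims W V (b + 1) 1 =
        W ⟨b, hb⟩ * Dmat dims W V b 1 + V ⟨b, hb⟩ * Dmat dims W V b 0 := by
      rw [Dmat, dif_pos hb]
    rw [hstep, ih (by omega), Dmat_k0 dims W V b (by omega)]
    conv_rhs => rw [E1, Finset.sum_range_succ]
    congr 1
    · rw [E1, Matrix.mul_sum]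
      apply Finset.sum_congr rfl
      intro j hj
      have hjb : j < b := Finset.mem_range.1 hj
      rw [segProd_succ_of_le dims W (by omega) hb, Matrix.mul_assoc]
    · rw [segProd_same, castId_self, Matrix.one_mul,
        show Vsel dims V b = V ⟨b, hb⟩ from dif_pos hb]

lemma Dmat_k2 : ∀ b : ℕ, b ≤ n → Dmat dims W V b 2 = E2 dims W V b := by
  intro b
  induction b with
  | zero => intro _; simp [E2]; rfl
  | succ b ih =>
    intro hb1
    have hb : b < n := by omega
    have hstep : Dmat dims W V (b + 1) 2 =
        W ⟨b, hb⟩ * Dmat dims W V b 2 + V ⟨b, hb⟩ * Dmat dims W V b 1 := by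
      rw [Dmat, dif_pos hb]
    rw [hstep, ih (by omega), Dmat_k1 dims W V b (by omega)]
    conv_rhs => rw [E2, Finset.sum_range_succ]
    congr 1
    · rw [E2, Matrix.mul_sum]
      apply Finset.sum_congr rfl
      intro k hk
      have hkb : k < b := Finset.mem_range.1 hk
      rw [Matrix.mul_sum]
      apply Finset.sum_congr rfl
      intro j hj
      rw [segProd_succ_of_le dims W (by omega) hb, Matrix.mul_assoc]
    · rw [E1, Matrix.mul_sum]
      apply Finset.sum_congr rfl
      intro j hj
      rw [segProd_same, castId_self, Matrix.one_mul,
        show Vsel dims V b = V ⟨b, hb⟩ from dif_pos hb]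

/-- The main polynomial expansion. -/
lemma segProd_poly : ∀ b : ℕ, b ≤ n → ∀ t : ℝ,
    segProd dims (fun j => W j + t • V j) 0 b =
      ∑ k ∈ Finset.range (b + 1), t ^ k • Dmat dims W V b k := by
  intro b
  induction b with
  | zero =>
    intro _ t
    show castId (dims 0) (dims 0) = _
    rw [Finset.sum_range_one]
    show castId (dims 0) (dims 0) = t ^ 0 • Dmat dims W V 0 0
    rw [pow_zero, one_smul]
    rfl
  | succ b ih =>
    intro hb1 t
    have hb : b < n := by omega
    rw [segProd_succ_of_le dims _ (Nat.zero_le b) hb, ih (by omega) t]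
    have hWV : (fun j => W j + t • V j) (⟨b, hb⟩ : Fin n) = W ⟨b, hb⟩ + t • V ⟨b, hb⟩ := rfl
    rw [Matrix.add_mul, Matrix.mul_sum, Matrix.mul_sum]
    have h1 : ∀ k ∈ Finset.range (b + 1), W ⟨b, hb⟩ * (t ^ k • Dmat dims W V b k) =
        t ^ k • (W ⟨b, hb⟩ * Dmat dims W V b k) := fun k _ => Matrix.mul_smul _ _ _
    have h2 : ∀ k ∈ Finset.range (b + 1), (t • V ⟨b, hb⟩) * (t ^ k • Dmat dims W V b k) =
        t ^ (k + 1) • (V ⟨b, hb⟩ * Dmat dims W V b k) := by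
      intro k _
      rw [Matrix.smul_mul, Matrix.mul_smul, smul_smul, ← pow_succ']
    rw [Finset.sum_congr rfl h1, Finset.sum_congr rfl h2]
    rw [Finset.sum_range_succ' (fun k => t ^ k • Dmat dims W V (b + 1) k) (b + 1)]
    have hD0 : Dmat dims W V (b + 1) 0 = W ⟨b, hb⟩ * Dmat dims W V b 0 := by
      rw [Dmat, dif_pos hb]
    have h3 : ∀ k ∈ Finset.range (b + 1), t ^ (k + 1) • Dmat dims W V (b + 1) (k + 1) =
        t ^ (k + 1) • (W ⟨b, hb⟩ * Dmat dims W V b (k + 1)) +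
          t ^ (k + 1) • (V ⟨b, hb⟩ * Dmat dims W V b k) := by
      intro k _
      rw [show Dmat dims W V (b + 1) (k + 1) = W ⟨b, hb⟩ * Dmat dims W V b (k + 1) +
        V ⟨b, hb⟩ * Dmat dims W V b k from by rw [Dmat, dif_pos hb], smul_add]
    rw [Finset.sum_congr rfl h3, Finset.sum_add_distrib, hD0, pow_zero, one_smul]
    have h4 : ∑ k ∈ Finset.range (b + 1), t ^ k • (W ⟨b, hb⟩ * Dmat dims W V b k) =
        ∑ k ∈ Finset.range (b + 1), t ^ (k + 1) • (W ⟨b, hb⟩ * Dmat dims W V b (k + 1)) +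
          W ⟨b, hb⟩ * Dmat dims W V b 0 := by
      rw [Finset.sum_range_succ (fun k => t ^ (k + 1) • (W ⟨b, hb⟩ * Dmat dims W V b (k + 1))) b]
      rw [Dmat_zero_of_gt dims W V b (b + 1) (by omega), Matrix.mul_zero, smul_zero, add_zero]
      rw [Finset.sum_range_succ' (fun k => t ^ k • (W ⟨b, hb⟩ * Dmat dims W V b k)) b]
      rw [pow_zero, one_smul]
    rw [h4]
    abel

/-- spec norm bound for partial products. -/
lemma specNorm_segProd_le (sw : ℕ → ℝ)
    (hsw : ∀ (i : ℕ) (h : i < n), sw i = specNorm (W ⟨i, h⟩)) :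
    ∀ b : ℕ, b ≤ n → ∀ a : ℕ, a ≤ b →
      specNorm (segProd dims W a b) ≤ ∏ i ∈ Finset.Ico a b, sw i := by
  intro b
  induction b with
  | zero =>
    intro _ a ha
    interval_cases a
    simp only [Finset.Ico_self, Finset.prod_empty]
    exact (segProd_same dims W 0) ▸ specNorm_castId_le_one _ _
  | succ b ih =>
    intro hb1 a ha
    by_cases hab : a = b + 1
    · subst hab
      rw [segProd_same]
      simp only [Finset.Ico_self, Finset.prod_empty]
      exact specNorm_castId_le_one _ _
    · have hab' : a ≤ b := by omega
      have hb : b < n := by omega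
      rw [segProd_succ_of_le dims W hab' hb,
        Finset.prod_Ico_succ_top hab']
      calc specNorm (W ⟨b, hb⟩ * segProd dims W a b)
          ≤ specNorm (W ⟨b, hb⟩) * specNorm (segProd dims W a b) := specNorm_mul_le _ _
        _ ≤ specNorm (W ⟨b, hb⟩) * ∏ i ∈ Finset.Ico a b, sw i :=
            mul_le_mul_of_nonneg_left (ih (by omega) a hab') (specNorm_nonneg _)
        _ = (∏ i ∈ Finset.Ico a b, sw i) * sw b := by rw [hsw b hb, mul_comm]
end Seg


/-- Lemma 2 of the paper: lower bound on the minimal eigenvalue of the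
Hessian of the training loss of a deep linear network, expressed as a quadratic-form bound:
`λ_min(∇²f(θ)) ≥ -(n-1)·√(min{d₀,dₙ})·‖∇φ(W_{n:1})‖_F · max_{|J|=n-2} ∏_{j∈J} ‖W_j‖_sp`. -/
theorem deep_linear_hessian_min_eig_lower_bound {n d : ℕ} (hn : 2 ≤ n) (dims : ℕ → ℕ)
    {Y : Type*} (s : ℕ) (hs : 0 < s)
    (x : Fin s → EuclideanSpace ℝ (Fin (dims 0))) (y : Fin s → Y)
    (loss : EuclideanSpace ℝ (Fin (dims n)) → Y → ℝ)
    (hconv : ∀ yy : Y, ConvexOn ℝ Set.univ (fun v => loss v yy))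
    (hsm : ∀ yy : Y, ContDiff ℝ 2 (fun v => loss v yy))
    (arr : EuclideanSpace ℝ (Fin d) →ₗ[ℝ] WeightFam n dims)
    (harr : Function.Bijective arr)
    (hinner : ∀ u v : EuclideanSpace ℝ (Fin d), ⟪u, v⟫ =
      ∑ j : Fin n, ∑ p : Fin (dims (j.val + 1)), ∑ q : Fin (dims j.val),
        arr u j p q * arr v j p q)
    (θ : EuclideanSpace ℝ (Fin d)) :
    ∀ v : EuclideanSpace ℝ (Fin d),
      -(((n : ℝ) - 1) * Real.sqrt (min (dims 0) (dims n)) *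
          ‖gradient (phiE n dims loss x y) (ofMat (segProd dims (arr θ) 0 n))‖ *
          sSup {r : ℝ | ∃ J : Finset (Fin n), J.card = n - 2 ∧
            r = ∏ j ∈ J, specNorm (arr θ j)}) * ‖v‖ ^ 2 ≤
        hessQ (linLoss dims loss x y arr) θ v := by
  intro v
  classical
  set φ := phiE n dims loss x y with hφdef
  set W : WeightFam n dims := arr θ with hWdef
  set V : WeightFam n dims := arr v with hVdef
  -- the matrix-to-output linear maps
  have Lmk : ∀ i : Fin s, ∃ L : MatE (dims n) (dims 0) →L[ℝ] EuclideanSpace ℝ (Fin (dims n)),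
      ∀ w, L w = mulVecE (toMat w) (x i) := by
    intro i
    refine ⟨LinearMap.toContinuousLinearMap
      { toFun := fun w => mulVecE (toMat w) (x i)
        map_add' := fun a b => by
          ext kk
          show (∑ jj, (a (kk, jj) + b (kk, jj)) * x i jj) =
            (∑ jj, a (kk, jj) * x i jj) + ∑ jj, b (kk, jj) * x i jj
          rw [← Finset.sum_add_distrib]
          exact Finset.sum_congr rfl fun jj _ => by ring
        map_smul' := fun c a => by
          ext kk
          show (∑ jj, (c * a (kk, jj)) * x i jj) = c * ∑ jj, a (kk, jj) * x i jj
          rw [Finset.mul_sum]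
          exact Finset.sum_congr rfl fun jj _ => by ring }, fun w => rfl⟩
  choose L hL using Lmk
  have hφL : φ = fun w => (1 / (s : ℝ)) * ∑ i, loss (L i w) (y i) := by
    funext w
    rw [hφdef]
    show (1 / (s : ℝ)) * ∑ i, loss (mulVecE (toMat w) (x i)) (y i) = _
    congr 1
    exact Finset.sum_congr rfl fun i _ => by rw [hL i w]
  -- φ is C²
  have hφsm : ContDiff ℝ 2 φ := by
    rw [hφL]
    exact contDiff_const.mul (ContDiff.sum fun i _ => (hsm (y i)).comp (L i).contDiff)
  -- φ is convex
  have hφconv : ConvexOn ℝ Set.univ φ := by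
    rw [hφL]
    refine ⟨convex_univ, ?_⟩
    intro w _ w' _ a b ha hb hab
    have hli : ∀ i : Fin s, loss (L i (a • w + b • w')) (y i) ≤
        a * loss (L i w) (y i) + b * loss (L i w') (y i) := by
      intro i
      have : L i (a • w + b • w') = a • L i w + b • L i w' := by
        rw [(L i).map_add, (L i).map_smul, (L i).map_smul]
      rw [this]
      exact (hconv (y i)).2 (Set.mem_univ _) (Set.mem_univ _) ha hb hab
    have hsum : (∑ i, loss (L i (a • w + b • w')) (y i)) ≤
        ∑ i, (a * loss (L i w) (y i) + b * loss (L i w') (y i)) :=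
      Finset.sum_le_sum fun i _ => hli i
    have hs' : (0 : ℝ) ≤ 1 / (s : ℝ) := by positivity
    calc (1 / (s : ℝ)) * ∑ i, loss (L i (a • w + b • w')) (y i)
        ≤ (1 / (s : ℝ)) * ∑ i, (a * loss (L i w) (y i) + b * loss (L i w') (y i)) :=
          mul_le_mul_of_nonneg_left hsum hs'
      _ = a • ((1 / (s : ℝ)) * ∑ i, loss (L i w) (y i)) +
          b • ((1 / (s : ℝ)) * ∑ i, loss (L i w') (y i)) := by
          rw [Finset.sum_add_distrib, ← Finset.mul_sum, ← Finset.mul_sum]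
          simp only [smul_eq_mul]
          ring
  -- the network map is C²
  have hkey : ∀ b : ℕ, b ≤ n → ∀ (i : Fin (dims b)) (j : Fin (dims 0)),
      ContDiff ℝ 2 (fun θ' : EuclideanSpace ℝ (Fin d) => segProd dims (arr θ') 0 b i j) := by
    intro b
    induction b with
    | zero =>
      intro _ i j
      show ContDiff ℝ 2 (fun _ : EuclideanSpace ℝ (Fin d) => castId (dims 0) (dims 0) i j)
      exact contDiff_const
    | succ b ihb =>
      intro hb1 i j
      have hb : b < n := by omega
      have heq : (fun θ' : EuclideanSpace ℝ (Fin d) => segProd dims (arr θ') 0 (b + 1) i j) =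
          fun θ' => ∑ kk, arr θ' ⟨b, hb⟩ i kk * segProd dims (arr θ') 0 b kk j := by
        funext θ'
        rw [segProd_succ_of_le dims (arr θ') (Nat.zero_le b) hb, Matrix.mul_apply]
      rw [heq]
      apply ContDiff.sum
      intro kk _
      have hlin : ContDiff ℝ 2 (fun θ' : EuclideanSpace ℝ (Fin d) => arr θ' ⟨b, hb⟩ i kk) := by
        exact (LinearMap.toContinuousLinearMap
          { toFun := fun θ' : EuclideanSpace ℝ (Fin d) => arr θ' ⟨b, hb⟩ i kk
            map_add' := fun a b' => by
              show arr (a + b') ⟨b, hb⟩ i kk = arr a ⟨b, hb⟩ i kk + arr b' ⟨b, hb⟩ i kk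
              rw [arr.map_add]
              rfl
            map_smul' := fun c a => by
              show arr (c • a) ⟨b, hb⟩ i kk = c • arr a ⟨b, hb⟩ i kk
              rw [arr.map_smul]
              rfl }).contDiff
      exact hlin.mul (ihb (by omega) kk j)
  have hN : ContDiff ℝ 2 (fun θ' : EuclideanSpace ℝ (Fin d) =>
      (ofMat (segProd dims (arr θ') 0 n) : MatE (dims n) (dims 0))) := by
    apply contDiff_euclidean.2
    intro ij
    exact hkey n le_rfl ij.1 ij.2
  have hf : ContDiff ℝ 2 (linLoss dims loss x y arr) := by
    have : linLoss dims loss x y arr =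
        φ ∘ (fun θ' => (ofMat (segProd dims (arr θ') 0 n) : MatE (dims n) (dims 0))) := rfl
    rw [this]
    exact hφsm.comp hN
  -- polynomial coefficients
  set m : ℕ → MatE (dims n) (dims 0) := fun k => ofMat (Dmat dims W V n k) with hmdef
  have hm0 : m 0 = ofMat (segProd dims (arr θ) 0 n) := by
    show ofMat (Dmat dims W V n 0) = _
    rw [Dmat_k0 dims W V n le_rfl]
  have hcurve : (fun t : ℝ => linLoss dims loss x y arr (θ + t • v)) =
      fun t : ℝ => φ (∑ k ∈ Finset.range (n + 1), t ^ k • m k) := by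
    funext t
    show φ (ofMat (segProd dims (arr (θ + t • v)) 0 n)) = _
    have harr' : arr (θ + t • v) = fun j => W j + t • V j := by
      rw [arr.map_add, arr.map_smul]
      rfl
    rw [harr', segProd_poly dims W V n le_rfl t, ofMat_sum]
    exact congrArg φ (Finset.sum_congr rfl fun k _ =>
      ofMat_smul (t ^ k) (Dmat dims W V n k))
  -- reduce the Hessian quadratic form
  have hq : hessQ (linLoss dims loss x y arr) θ v =
      (fderiv ℝ (fderiv ℝ φ) (m 0) (m 1)) (m 1) + fderiv ℝ φ (m 0) ((2 : ℝ) • m 2) := by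
    calc hessQ (linLoss dims loss x y arr) θ v
        = (fderiv ℝ (fderiv ℝ (linLoss dims loss x y arr)) θ v) v :=
          hessQ_eq_fderiv2 _ hf θ v
      _ = deriv (deriv fun t : ℝ => linLoss dims loss x y arr (θ + t • v)) 0 :=
          (deriv2_line _ hf θ v).symm
      _ = deriv (deriv fun t : ℝ => φ (∑ k ∈ Finset.range (n + 1), t ^ k • m k)) 0 := by
          rw [hcurve]
      _ = _ := polyCurve_deriv2 φ hφsm hn m
  rw [hq, ← hm0]
  -- first term is nonnegative
  have hT1 : 0 ≤ (fderiv ℝ (fderiv ℝ φ) (m 0) (m 1)) (m 1) :=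
    fderiv2_nonneg_of_convex φ hφsm hφconv (m 0) (m 1)
  -- the supremum
  set SS := sSup {r : ℝ | ∃ J : Finset (Fin n), J.card = n - 2 ∧
      r = ∏ j ∈ J, specNorm (arr θ j)} with hSSdef
  have hbdd : BddAbove {r : ℝ | ∃ J : Finset (Fin n), J.card = n - 2 ∧
      r = ∏ j ∈ J, specNorm (arr θ j)} := by
    apply Set.Finite.bddAbove
    apply Set.Finite.subset (Set.finite_range
      (fun J : Finset (Fin n) => ∏ j ∈ J, specNorm (arr θ j)))
    rintro r ⟨J, _, rfl⟩
    exact ⟨J, rfl⟩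
  have hSS0 : 0 ≤ SS := by
    obtain ⟨J0, _, hJ0⟩ := Finset.exists_subset_card_eq
      (show n - 2 ≤ (Finset.univ : Finset (Fin n)).card by rw [Finset.card_univ, Fintype.card_fin]; omega)
    have hmem : (∏ j ∈ J0, specNorm (arr θ j)) ∈ {r : ℝ | ∃ J : Finset (Fin n),
        J.card = n - 2 ∧ r = ∏ j ∈ J, specNorm (arr θ j)} := ⟨J0, hJ0, rfl⟩
    exact le_trans (Finset.prod_nonneg fun j _ => specNorm_nonneg _) (le_csSup hbdd hmem)
  -- spectral norm weights
  set sw : ℕ → ℝ := fun i => if h : i < n then specNorm (W ⟨i, h⟩) else 1 with hswdef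
  have hsw : ∀ (i : ℕ) (h : i < n), sw i = specNorm (W ⟨i, h⟩) := fun i h => dif_pos h
  have hsw0 : ∀ i, 0 ≤ sw i := by
    intro i
    show (0 : ℝ) ≤ if h : i < n then specNorm (W ⟨i, h⟩) else 1
    by_cases h : i < n
    · rw [dif_pos h]; exact specNorm_nonneg _
    · rw [dif_neg h]; exact zero_le_one
  have hP0 : ∀ A : Finset ℕ, 0 ≤ ∏ i ∈ A, sw i := fun A => Finset.prod_nonneg fun i _ => hsw0 i
  set aa : ℕ → ℝ := fun l => ‖ofMat (Vsel dims V l)‖ with haadef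
  have haa0 : ∀ l, 0 ≤ aa l := fun l => norm_nonneg _
  -- per-term bound
  have hterm : ∀ k, k < n → ∀ j, j < k →
      ‖ofMat (segProd dims W (k + 1) n * (Vsel dims V k *
        (segProd dims W (j + 1) k * (Vsel dims V j * segProd dims W 0 j))))‖ ≤
      SS * (aa k * aa j) := by
    intro k hk j hj
    have hPS : (∏ i ∈ Finset.Ico (k + 1) n, sw i) *
        ((∏ i ∈ Finset.Ico (j + 1) k, sw i) * (∏ i ∈ Finset.Ico 0 j, sw i)) ≤ SS := by
      have hd1 : Disjoint (Finset.Ico (j + 1) k) (Finset.Ico 0 j) := by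
        rw [Finset.disjoint_left]
        intro a ha hb
        rw [Finset.mem_Ico] at ha hb
        omega
      have hd2 : Disjoint (Finset.Ico (k + 1) n) (Finset.Ico (j + 1) k ∪ Finset.Ico 0 j) := by
        rw [Finset.disjoint_left]
        intro a ha hb
        rw [Finset.mem_union, Finset.mem_Ico, Finset.mem_Ico] at hb
        rw [Finset.mem_Ico] at ha
        omega
      set A : Finset ℕ := Finset.Ico (k + 1) n ∪ (Finset.Ico (j + 1) k ∪ Finset.Ico 0 j)
        with hAdef
      have hAn : ∀ mm ∈ A, mm < n := by
        intro mm hmm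
        rw [hAdef, Finset.mem_union, Finset.mem_union, Finset.mem_Ico, Finset.mem_Ico,
          Finset.mem_Ico] at hmm
        omega
      have hprodA : (∏ i ∈ Finset.Ico (k + 1) n, sw i) *
          ((∏ i ∈ Finset.Ico (j + 1) k, sw i) * (∏ i ∈ Finset.Ico 0 j, sw i)) =
          ∏ i ∈ A, sw i := by
        rw [hAdef, Finset.prod_union hd2, Finset.prod_union hd1]
      have hcardA : A.card = n - 2 := by
        rw [hAdef, Finset.card_union_of_disjoint hd2, Finset.card_union_of_disjoint hd1]
        rw [Nat.card_Ico, Nat.card_Ico, Nat.card_Ico]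
        omega
      set J : Finset (Fin n) := A.attachFin hAn with hJdef
      have hcardJ : J.card = n - 2 := by
        rw [hJdef, Finset.card_attachFin, hcardA]
      have hprodJ : (∏ jj ∈ J, specNorm (arr θ jj)) = ∏ i ∈ A, sw i := by
        rw [hJdef]
        apply Finset.prod_bij (fun (jj : Fin n) (_ : jj ∈ A.attachFin hAn) => (jj : ℕ))
        · intro a ha
          exact (Finset.mem_attachFin hAn).1 ha
        · intro a _ b _ hab
          exact Fin.ext hab
        · intro mm hmm
          exact ⟨⟨mm, hAn mm hmm⟩, (Finset.mem_attachFin hAn).2 hmm, rfl⟩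
        · intro a _
          rw [hsw (a : ℕ) a.isLt]
      rw [hprodA, ← hprodJ]
      exact le_csSup hbdd ⟨J, hcardJ, rfl⟩
    -- chain of norm bounds
    have c1 : ‖ofMat (segProd dims W (k + 1) n * (Vsel dims V k *
        (segProd dims W (j + 1) k * (Vsel dims V j * segProd dims W 0 j))))‖ ≤
        specNorm (segProd dims W (k + 1) n) * ‖ofMat (Vsel dims V k *
        (segProd dims W (j + 1) k * (Vsel dims V j * segProd dims W 0 j)))‖ :=
      frob_mul_le_left _ _
    have c2 : ‖ofMat (Vsel dims V k *
        (segProd dims W (j + 1) k * (Vsel dims V j * segProd dims W 0 j)))‖ ≤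
        aa k * specNorm (segProd dims W (j + 1) k * (Vsel dims V j * segProd dims W 0 j)) :=
      frob_mul_le_right _ _
    have c3 : specNorm (segProd dims W (j + 1) k * (Vsel dims V j * segProd dims W 0 j)) ≤
        specNorm (segProd dims W (j + 1) k) * (specNorm (Vsel dims V j) *
          specNorm (segProd dims W 0 j)) :=
      le_trans (specNorm_mul_le _ _)
        (mul_le_mul_of_nonneg_left (specNorm_mul_le _ _) (specNorm_nonneg _))
    have p1 : specNorm (segProd dims W (k + 1) n) ≤ ∏ i ∈ Finset.Ico (k + 1) n, sw i :=
      specNorm_segProd_le dims W sw hsw n le_rfl (k + 1) (by omega)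
    have p2 : specNorm (segProd dims W (j + 1) k) ≤ ∏ i ∈ Finset.Ico (j + 1) k, sw i :=
      specNorm_segProd_le dims W sw hsw k (by omega) (j + 1) (by omega)
    have p3 : specNorm (segProd dims W 0 j) ≤ ∏ i ∈ Finset.Ico 0 j, sw i :=
      specNorm_segProd_le dims W sw hsw j (by omega) 0 (by omega)
    have c5 : specNorm (Vsel dims V j) ≤ aa j := specNorm_le_frob _
    have inner2 : specNorm (segProd dims W (j + 1) k) * (specNorm (Vsel dims V j) *
        specNorm (segProd dims W 0 j)) ≤
        (∏ i ∈ Finset.Ico (j + 1) k, sw i) * (aa j * (∏ i ∈ Finset.Ico 0 j, sw i)) := by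
      apply mul_le_mul p2 (mul_le_mul c5 p3 (specNorm_nonneg _) (haa0 j))
        (mul_nonneg (specNorm_nonneg _) (specNorm_nonneg _)) (hP0 _)
    calc ‖ofMat (segProd dims W (k + 1) n * (Vsel dims V k *
          (segProd dims W (j + 1) k * (Vsel dims V j * segProd dims W 0 j))))‖
        ≤ specNorm (segProd dims W (k + 1) n) * (aa k *
            (specNorm (segProd dims W (j + 1) k) * (specNorm (Vsel dims V j) *
              specNorm (segProd dims W 0 j)))) := by
          refine le_trans c1 ?_
          apply mul_le_mul_of_nonneg_left _ (specNorm_nonneg _)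
          refine le_trans c2 ?_
          exact mul_le_mul_of_nonneg_left c3 (haa0 k)
      _ ≤ (∏ i ∈ Finset.Ico (k + 1) n, sw i) * (aa k *
            ((∏ i ∈ Finset.Ico (j + 1) k, sw i) * (aa j * (∏ i ∈ Finset.Ico 0 j, sw i)))) := by
          apply mul_le_mul p1 _ _ (hP0 _)
          · exact mul_le_mul_of_nonneg_left inner2 (haa0 k)
          · apply mul_nonneg (haa0 k)
            apply mul_nonneg (specNorm_nonneg _)
            exact mul_nonneg (specNorm_nonneg _) (specNorm_nonneg _)
      _ = ((∏ i ∈ Finset.Ico (k + 1) n, sw i) *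
            ((∏ i ∈ Finset.Ico (j + 1) k, sw i) * (∏ i ∈ Finset.Ico 0 j, sw i))) *
            (aa k * aa j) := by ring
      _ ≤ SS * (aa k * aa j) :=
          mul_le_mul_of_nonneg_right hPS (mul_nonneg (haa0 k) (haa0 j))
  -- bound on ‖m 2‖
  have hm2sum : ‖m 2‖ ≤ SS * ∑ k ∈ Finset.range n, ∑ j ∈ Finset.range k, aa k * aa j := by
    have h2 : m 2 = ∑ k ∈ Finset.range n, ∑ j ∈ Finset.range k,
        ofMat (segProd dims W (k + 1) n * (Vsel dims V k *
          (segProd dims W (j + 1) k * (Vsel dims V j * segProd dims W 0 j)))) := by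
      show ofMat (Dmat dims W V n 2) = _
      rw [Dmat_k2 dims W V n le_rfl]
      rw [E2, ofMat_sum]
      exact Finset.sum_congr rfl fun k _ => ofMat_sum _ _
    rw [h2, Finset.mul_sum]
    refine le_trans (norm_sum_le _ _) ?_
    apply Finset.sum_le_sum
    intro k hk
    rw [Finset.mul_sum]
    refine le_trans (norm_sum_le _ _) ?_
    apply Finset.sum_le_sum
    intro j hj
    exact hterm k (Finset.mem_range.1 hk) j (Finset.mem_range.1 hj)
  -- sum of squares equals ‖v‖²
  have hsumsq : ∑ l ∈ Finset.range n, aa l ^ 2 = ‖v‖ ^ 2 := by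
    rw [← real_inner_self_eq_norm_sq v, hinner v v, ← Fin.sum_univ_eq_sum_range]
    apply Finset.sum_congr rfl
    intro jj _
    show ‖ofMat (Vsel dims V (jj : ℕ))‖ ^ 2 = _
    rw [show Vsel dims V (jj : ℕ) = arr v jj from dif_pos jj.isLt, frob_sq]
    exact Finset.sum_congr rfl fun p _ => Finset.sum_congr rfl fun q _ =>
      pow_two (arr v jj p q)
  -- pair sum inequality
  have hpair : ∑ k ∈ Finset.range n, ∑ j ∈ Finset.range k, aa k * aa j ≤
      (((n : ℝ) - 1) * ‖v‖ ^ 2) / 2 := by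
    have hid := pair_sum_identity aa
    have hcs : (∑ l ∈ Finset.range n, aa l) ^ 2 ≤
        (n : ℝ) * ∑ l ∈ Finset.range n, aa l ^ 2 := by
      have h := sq_sum_le_card_mul_sum_sq (s := Finset.range n) (f := aa)
      simpa using h
    rw [hsumsq] at hcs
    linarith [hid n, hcs, hsumsq.le, hsumsq.ge]
  -- pairing with the gradient
  have hpairing : fderiv ℝ φ (m 0) ((2 : ℝ) • m 2) = ⟪gradient φ (m 0), (2 : ℝ) • m 2⟫ := by
    rw [show gradient φ (m 0) =
      (InnerProductSpace.toDual ℝ (MatE (dims n) (dims 0))).symm (fderiv ℝ φ (m 0)) from rfl]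
    rw [InnerProductSpace.toDual_symm_apply]
  have habs : |⟪gradient φ (m 0), (2 : ℝ) • m 2⟫| ≤
      ‖gradient φ (m 0)‖ * ‖(2 : ℝ) • m 2‖ := abs_real_inner_le_norm _ _
  have hnorm2 : ‖(2 : ℝ) • m 2‖ = 2 * ‖m 2‖ := by
    rw [norm_smul]
    simp
  have hm2b : ‖m 2‖ ≤ SS * ((((n : ℝ) - 1) * ‖v‖ ^ 2) / 2) :=
    le_trans hm2sum (mul_le_mul_of_nonneg_left hpair hSS0)
  have hT2 : -(((n : ℝ) - 1) * ‖gradient φ (m 0)‖ * SS * ‖v‖ ^ 2) ≤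
      fderiv ℝ φ (m 0) ((2 : ℝ) • m 2) := by
    rw [hpairing]
    have h1 : ‖gradient φ (m 0)‖ * ‖(2 : ℝ) • m 2‖ ≤
        ((n : ℝ) - 1) * ‖gradient φ (m 0)‖ * SS * ‖v‖ ^ 2 := by
      rw [hnorm2]
      calc ‖gradient φ (m 0)‖ * (2 * ‖m 2‖)
          ≤ ‖gradient φ (m 0)‖ * (2 * (SS * ((((n : ℝ) - 1) * ‖v‖ ^ 2) / 2))) :=
            mul_le_mul_of_nonneg_left (by linarith [hm2b]) (norm_nonneg _)
        _ = ((n : ℝ) - 1) * ‖gradient φ (m 0)‖ * SS * ‖v‖ ^ 2 := by ring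
    have h2 := neg_abs_le (⟪gradient φ (m 0), (2 : ℝ) • m 2⟫ : ℝ)
    linarith [habs]
  rcases Nat.eq_zero_or_pos (min (dims 0) (dims n)) with hmin | hmin
  · -- degenerate case: one of the outer dimensions is zero
    have hie : IsEmpty (Fin (dims n) × Fin (dims 0)) := by
      rcases Nat.min_eq_zero_iff.1 hmin with h0 | h0
      · exact ⟨fun p => absurd p.2.2 (by omega)⟩
      · exact ⟨fun p => absurd p.1.2 (by omega)⟩
    have hg0 : ‖gradient φ (m 0)‖ = 0 := by
      haveI := hie
      have h0 : gradient φ (m 0) = 0 := Subsingleton.elim _ _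
      rw [h0, norm_zero]
    rw [hg0]
    have hT2' : (0 : ℝ) ≤ fderiv ℝ φ (m 0) ((2 : ℝ) • m 2) := by
      rw [hg0] at hT2
      linarith [hT2]
    have hz : -(((n : ℝ) - 1) * Real.sqrt (min (dims 0) (dims n)) * 0 * SS) * ‖v‖ ^ 2 = 0 := by
      ring
    rw [hz]
    linarith [hT1, hT2']
  · -- nondegenerate case
    have hd0 : 1 ≤ dims 0 := by omega
    have hdn : 1 ≤ dims n := by
      have := Nat.min_le_right (dims 0) (dims n)
      omega
    have hsq1 : (1 : ℝ) ≤ Real.sqrt (min (dims 0) (dims n)) := by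
      have hmin1 : (1 : ℝ) ≤ min ((dims 0 : ℝ)) ((dims n : ℝ)) := by
        refine le_min ?_ ?_
        · exact_mod_cast hd0
        · exact_mod_cast hdn
      calc (1 : ℝ) = Real.sqrt 1 := Real.sqrt_one.symm
        _ ≤ Real.sqrt (min (dims 0) (dims n)) := Real.sqrt_le_sqrt hmin1
    have hn2 : (2 : ℝ) ≤ (n : ℝ) := by exact_mod_cast hn
    have hnn : 0 ≤ (((n : ℝ) - 1) * ‖gradient φ (m 0)‖ * SS) * ‖v‖ ^ 2 := by
      apply mul_nonneg _ (sq_nonneg _)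
      apply mul_nonneg _ hSS0
      apply mul_nonneg _ (norm_nonneg _)
      linarith
    have hmono : (((n : ℝ) - 1) * ‖gradient φ (m 0)‖ * SS) * ‖v‖ ^ 2 ≤
        (((n : ℝ) - 1) * Real.sqrt (min (dims 0) (dims n)) * ‖gradient φ (m 0)‖ * SS) *
          ‖v‖ ^ 2 := by
      calc (((n : ℝ) - 1) * ‖gradient φ (m 0)‖ * SS) * ‖v‖ ^ 2
          = ((((n : ℝ) - 1) * ‖gradient φ (m 0)‖ * SS) * ‖v‖ ^ 2) * 1 := (mul_one _).symm
        _ ≤ ((((n : ℝ) - 1) * ‖gradient φ (m 0)‖ * SS) * ‖v‖ ^ 2) *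
              Real.sqrt (min (dims 0) (dims n)) := mul_le_mul_of_nonneg_left hsq1 hnn
        _ = (((n : ℝ) - 1) * Real.sqrt (min (dims 0) (dims n)) * ‖gradient φ (m 0)‖ * SS) *
              ‖v‖ ^ 2 := by ring
    linarith [hT1, hT2, hmono]
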